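/- arXiv:2201.00899 — 4 statements merged into one kernel-verified Lean document; each statement's English description precedes it below -/
import Mathlib

section
/- Let $p$ be an odd prime. Then the $p$-adic valuation of the Bernoulli number $B_{p-1}$ is $-1$; equivalently, $p \cdot B_{p-1} \in 1 + p\mathbb{Z}_{(p)}$. -/
open Finset

/-- Binomial identity `(n+1) * C(n,i) = (n+1-i) * C(n+1,i)` for `i ≤ n`. -/
lemma vsc_choose_aux (n i : ℕ) (hi : i ≤ n) :
    (n + 1) * n.choose i = (n + 1 - i) * (n + 1).choose i := by
  have h := Nat.add_one_mul_choose_eq n (n - i)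
  rw [Nat.choose_symm hi] at h
  have h2 : (n + 1).choose (n - i + 1) = (n + 1).choose i := by
    have : n - i + 1 = (n + 1) - i := by omega
    rw [this, Nat.choose_symm (by omega)]
  rw [h2] at h
  have h3 : n - i + 1 = n + 1 - i := by omega
  calc (n + 1) * n.choose i = (n + 1).choose i * (n - i + 1) := h
    _ = (n + 1 - i) * (n + 1).choose i := by rw [h3]; ring

/-- Faulhaber rearranged: `p·Bₙ = Sₙ(p) - ∑_{i<n} (p·Bᵢ)·(C(n,i)·p^{n-i}/(n+1-i))`. -/
lemma vsc_rearrange (p n : ℕ) (hp : 0 < p) :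
    (p : ℚ) * bernoulli n = (∑ k ∈ range p, (k : ℚ) ^ n)
      - ∑ i ∈ range n, ((p : ℚ) * bernoulli i) *
          ((n.choose i : ℚ) * (p : ℚ) ^ (n - i) / ((n + 1 - i : ℕ) : ℚ)) := by
  have h := sum_range_pow p n
  rw [Finset.sum_range_succ] at h
  have hlast : bernoulli n * ((n + 1).choose n : ℚ) * (p : ℚ) ^ (n + 1 - n) / (n + 1)
      = (p : ℚ) * bernoulli n := by
    rw [Nat.choose_succ_self_right, Nat.add_sub_cancel_left]
    have hn1 : ((n : ℚ) + 1) ≠ 0 := by positivity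
    push_cast
    field_simp
  rw [hlast] at h
  have hterm : ∀ i ∈ range n,
      bernoulli i * (((n + 1).choose i : ℕ) : ℚ) * (p : ℚ) ^ (n + 1 - i) / (n + 1)
        = ((p : ℚ) * bernoulli i) *
          ((n.choose i : ℚ) * (p : ℚ) ^ (n - i) / ((n + 1 - i : ℕ) : ℚ)) := by
    intro i hi
    rw [Finset.mem_range] at hi
    have hkey := vsc_choose_aux n i hi.le
    have hkeyQ : ((n : ℚ) + 1) * (n.choose i : ℚ)
        = ((n + 1 - i : ℕ) : ℚ) * (((n + 1).choose i : ℕ) : ℚ) := by exact_mod_cast hkey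
    have h1 : ((n : ℚ) + 1) ≠ 0 := by positivity
    have h2 : ((n + 1 - i : ℕ) : ℚ) ≠ 0 := by
      have : 0 < n + 1 - i := by omega
      exact_mod_cast this.ne'
    have hpow : (p : ℚ) ^ (n + 1 - i) = (p : ℚ) * (p : ℚ) ^ (n - i) := by
      have : n + 1 - i = (n - i) + 1 := by omega
      rw [this, pow_succ]; ring
    rw [hpow]
    field_simp
    linear_combination (-(bernoulli i)) * hkeyQ
  rw [Finset.sum_congr rfl hterm] at h
  linarith [h]

variable {p : ℕ} [hp : Fact p.Prime]

/-- Norm bound for the coefficient. -/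
lemma vsc_norm_c_le (n i : ℕ) (hin : i < n) :
    ‖((n.choose i : ℚ_[p])) * (p : ℚ_[p]) ^ (n - i) / ((n + 1 - i : ℕ) : ℚ_[p])‖
      ≤ (p : ℝ) ^ ((padicValNat p (n + 1 - i) : ℤ) - (n - i : ℕ)) := by
  have hm : (n + 1 - i) ≠ 0 := by omega
  have hmQ : ((n + 1 - i : ℕ) : ℚ_[p]) ≠ 0 := Nat.cast_ne_zero.mpr hm
  have hnorm_m : ‖((n + 1 - i : ℕ) : ℚ_[p])‖ = (p : ℝ) ^ (-(padicValNat p (n + 1 - i) : ℤ)) := by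
    rw [Padic.norm_eq_zpow_neg_valuation hmQ, Padic.valuation_natCast]
  have hC : ‖((n.choose i : ℕ) : ℚ_[p])‖ ≤ 1 := by
    have := Padic.norm_int_le_one (p := p) (n.choose i : ℤ)
    push_cast at this ⊢
    exact this
  rw [norm_div, norm_mul, hnorm_m, Padic.norm_p_pow]
  have hp1 : (1 : ℝ) < (p : ℝ) := by exact_mod_cast hp.out.one_lt
  have hppos : (0 : ℝ) < (p : ℝ) := by linarith
  calc ‖((n.choose i : ℚ_[p]))‖ * (p : ℝ) ^ (-((n - i : ℕ) : ℤ)) / (p : ℝ) ^ (-(padicValNat p (n + 1 - i) : ℤ))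
      ≤ 1 * (p : ℝ) ^ (-((n - i : ℕ) : ℤ)) / (p : ℝ) ^ (-(padicValNat p (n + 1 - i) : ℤ)) := by
        gcongr

    _ = (p : ℝ) ^ ((padicValNat p (n + 1 - i) : ℤ) - (n - i : ℕ)) := by
        rw [one_mul, ← zpow_sub₀ (by positivity)]
        ring_nf

/-- The valuation of `n+1-i` is at most `n-i` when `i < n`. -/
lemma vsc_val_le (n i : ℕ) (hin : i < n) (hp2 : 2 ≤ p) :
    padicValNat p (n + 1 - i) ≤ n - i := by
  have hm : (n + 1 - i) ≠ 0 := by omega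
  have h1 : p ^ padicValNat p (n + 1 - i) ≤ n + 1 - i :=
    Nat.le_of_dvd (by omega) pow_padicValNat_dvd
  have h2 : n + 1 - i ≤ p ^ (n - i) := by
    calc n + 1 - i = (n - i) + 1 := by omega
    _ ≤ 2 ^ (n - i) := Nat.lt_two_pow_self
    _ ≤ p ^ (n - i) := Nat.pow_le_pow_left hp2 _
  have := h1.trans h2
  exact (Nat.pow_le_pow_iff_right (by omega)).mp this

lemma vsc_norm_c_le_one (n i : ℕ) (hin : i < n) :
    ‖((n.choose i : ℚ_[p])) * (p : ℚ_[p]) ^ (n - i) / ((n + 1 - i : ℕ) : ℚ_[p])‖ ≤ 1 := by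
  refine (vsc_norm_c_le n i hin).trans ?_
  have hp1 : (1 : ℝ) < (p : ℝ) := by exact_mod_cast hp.out.one_lt
  have hv := vsc_val_le n i hin hp.out.two_le
  calc (p : ℝ) ^ ((padicValNat p (n + 1 - i) : ℤ) - (n - i : ℕ))
      ≤ (p : ℝ) ^ (0 : ℤ) := by
        apply zpow_le_zpow_right₀ hp1.le
        omega
    _ = 1 := zpow_zero _

/-- Strong induction: `‖p·Bₙ‖ ≤ 1`. -/
lemma vsc_norm_p_mul_bernoulli_le (n : ℕ) :
    ‖(((p : ℚ) * bernoulli n : ℚ) : ℚ_[p])‖ ≤ 1 := by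
  induction n using Nat.strong_induction_on with
  | _ n ih =>
    rw [vsc_rearrange p n hp.out.pos]
    push_cast
    rw [sub_eq_add_neg]
    refine (Padic.nonarchimedean _ _).trans (max_le ?_ ?_)
    · -- norm of the power sum
      have : (∑ k ∈ range p, (k : ℚ_[p]) ^ n) = (((∑ k ∈ range p, k ^ n : ℕ) : ℤ) : ℚ_[p]) := by
        push_cast
        rfl
      rw [this]
      exact Padic.norm_int_le_one _
    · rw [norm_neg]
      apply IsUltrametricDist.norm_sum_le_of_forall_le_of_nonneg zero_le_one
      intro i hi
      rw [Finset.mem_range] at hi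
      rw [norm_mul]
      have h1 : ‖(p : ℚ_[p]) * (bernoulli i : ℚ_[p])‖ ≤ 1 := by
        have := ih i hi
        push_cast at this
        exact this
      have h2 : ‖((n.choose i : ℚ_[p])) * (p : ℚ_[p]) ^ (n - i) / ((n + 1 - i : ℕ) : ℚ_[p])‖ ≤ 1 :=
        vsc_norm_c_le_one n i hi
      calc ‖(p : ℚ_[p]) * (bernoulli i : ℚ_[p])‖ * ‖((n.choose i : ℚ_[p])) * (p : ℚ_[p]) ^ (n - i) / ((n + 1 - i : ℕ) : ℚ_[p])‖
          ≤ 1 * 1 := mul_le_mul h1 h2 (norm_nonneg _) zero_le_one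
        _ = 1 := one_mul 1

/-- For an odd prime `p`, the `p`-adic valuation of the Bernoulli number `B_{p-1}` is `-1`
(von Staudt–Clausen). -/
theorem padicValRat_bernoulli_pred_prime (p : ℕ) (hp : p.Prime) (hodd : Odd p) :
    padicValRat p (bernoulli (p - 1)) = -1 := by
  haveI : Fact p.Prime := ⟨hp⟩
  have hp3 : 3 ≤ p := by
    have h2 := hp.two_le
    have : p ≠ 2 := by rintro rfl; exact (Nat.not_odd_iff_even.mpr (by decide)) hodd
    omega
  have hn : p - 1 + 1 = p := by omega
  -- the key element A = p * B_{p-1} in ℚ_[p]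
  set A : ℚ_[p] := (((p : ℚ) * bernoulli (p - 1) : ℚ) : ℚ_[p]) with hA
  -- rearranged Faulhaber
  have hre := vsc_rearrange p (p - 1) (by omega)
  have hAeq : A = (∑ k ∈ Finset.range p, (k : ℚ_[p]) ^ (p - 1))
      - ∑ i ∈ Finset.range (p - 1), (((p : ℚ) * bernoulli i : ℚ) : ℚ_[p]) *
          ((((p - 1).choose i : ℕ) : ℚ_[p]) * (p : ℚ_[p]) ^ (p - 1 - i)
            / (((p - 1 + 1 - i : ℕ) : ℕ) : ℚ_[p])) := by
    rw [hA, hre]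
    push_cast
    ring
  -- the power sum is -1 mod p
  have hS : ‖(∑ k ∈ Finset.range p, (k : ℚ_[p]) ^ (p - 1)) + 1‖ < 1 := by
    have hcast : (∑ k ∈ Finset.range p, (k : ℚ_[p]) ^ (p - 1)) + 1
        = ((((∑ k ∈ Finset.range p, k ^ (p - 1) : ℕ) + 1 : ℕ) : ℤ) : ℚ_[p]) := by
      push_cast; ring
    rw [hcast]
    rw [Padic.norm_intCast_lt_one_iff]
    have hzmod : (((∑ k ∈ Finset.range p, k ^ (p - 1) : ℕ) + 1 : ℕ) : ZMod p) = 0 := by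
      push_cast
      have hsplit := Finset.sum_range_succ' (fun k => ((k : ℕ) : ZMod p) ^ (p - 1)) (p - 1)
      rw [hn] at hsplit
      rw [hsplit]
      have hzero : ((0 : ℕ) : ZMod p) ^ (p - 1) = 0 := by
        rw [Nat.cast_zero, zero_pow (by omega)]
      rw [hzero, add_zero]
      have hone : ∀ i ∈ Finset.range (p - 1), ((i + 1 : ℕ) : ZMod p) ^ (p - 1) = 1 := by
        intro i hi
        rw [Finset.mem_range] at hi
        apply ZMod.pow_card_sub_one_eq_one
        rw [Ne, ZMod.natCast_eq_zero_iff]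
        intro hdvd
        have := Nat.le_of_dvd (by omega) hdvd
        omega
      rw [Finset.sum_congr rfl hone, Finset.sum_const, Finset.card_range, nsmul_eq_mul, mul_one]
      have : ((p - 1 : ℕ) : ZMod p) + 1 = ((p - 1 + 1 : ℕ) : ZMod p) := by push_cast; ring
      rw [this, hn, ZMod.natCast_self]
    have := (ZMod.natCast_eq_zero_iff _ p).mp hzmod
    exact_mod_cast Int.natCast_dvd_natCast.mpr this
  -- each term of the correction sum has norm < 1
  have hp1R : (1 : ℝ) < (p : ℝ) := by exact_mod_cast hp.one_lt
  have hT : ‖∑ i ∈ Finset.range (p - 1), (((p : ℚ) * bernoulli i : ℚ) : ℚ_[p]) *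
          ((((p - 1).choose i : ℕ) : ℚ_[p]) * (p : ℚ_[p]) ^ (p - 1 - i)
            / (((p - 1 + 1 - i : ℕ) : ℕ) : ℚ_[p]))‖ ≤ (p : ℝ)⁻¹ := by
    apply IsUltrametricDist.norm_sum_le_of_forall_le_of_nonneg (by positivity)
    intro i hi
    rw [Finset.mem_range] at hi
    rw [norm_mul]
    have h1 : ‖(((p : ℚ) * bernoulli i : ℚ) : ℚ_[p])‖ ≤ 1 := vsc_norm_p_mul_bernoulli_le i
    have h2 : ‖(((p - 1).choose i : ℕ) : ℚ_[p]) * (p : ℚ_[p]) ^ (p - 1 - i)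
            / (((p - 1 + 1 - i : ℕ) : ℕ) : ℚ_[p])‖ ≤ (p : ℝ)⁻¹ := by
      refine (vsc_norm_c_le (p - 1) i hi).trans ?_
      have hv : padicValNat p (p - 1 + 1 - i) + 1 ≤ p - 1 - i := by
        rcases Nat.eq_zero_or_pos i with rfl | hipos
        · have : p - 1 + 1 - 0 = p := by omega
          rw [this, padicValNat.self hp.one_lt]
          omega
        · have hm : p - 1 + 1 - i = p - i := by omega
          have hnd : ¬ p ∣ (p - i) := by
            intro hdvd
            have := Nat.le_of_dvd (by omega) hdvd
            omega
          rw [hm, padicValNat.eq_zero_of_not_dvd hnd]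
          omega
      calc (p : ℝ) ^ ((padicValNat p (p - 1 + 1 - i) : ℤ) - (p - 1 - i : ℕ))
          ≤ (p : ℝ) ^ (-1 : ℤ) := by
            apply zpow_le_zpow_right₀ hp1R.le
            omega
        _ = (p : ℝ)⁻¹ := by simp
    calc ‖(((p : ℚ) * bernoulli i : ℚ) : ℚ_[p])‖ * ‖(((p - 1).choose i : ℕ) : ℚ_[p]) * (p : ℚ_[p]) ^ (p - 1 - i)
            / (((p - 1 + 1 - i : ℕ) : ℕ) : ℚ_[p])‖
        ≤ 1 * (p : ℝ)⁻¹ := mul_le_mul h1 h2 (norm_nonneg _) zero_le_one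
      _ = (p : ℝ)⁻¹ := one_mul _
  -- ‖A + 1‖ < 1
  have hA1 : ‖A + 1‖ < 1 := by
    have : A + 1 = ((∑ k ∈ Finset.range p, (k : ℚ_[p]) ^ (p - 1)) + 1)
        + (-(∑ i ∈ Finset.range (p - 1), (((p : ℚ) * bernoulli i : ℚ) : ℚ_[p]) *
          ((((p - 1).choose i : ℕ) : ℚ_[p]) * (p : ℚ_[p]) ^ (p - 1 - i)
            / (((p - 1 + 1 - i : ℕ) : ℕ) : ℚ_[p])))) := by
      rw [hAeq]; ring
    rw [this]
    refine lt_of_le_of_lt (Padic.nonarchimedean _ _) (max_lt hS ?_)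
    rw [norm_neg]
    refine lt_of_le_of_lt hT ?_
    rw [inv_lt_one_iff₀]
    right; exact hp1R
  -- hence ‖A‖ = 1
  have hAnorm : ‖A‖ = 1 := by
    have hne : ‖A + 1‖ ≠ ‖(-1 : ℚ_[p])‖ := by
      rw [norm_neg, norm_one]; exact hA1.ne
    have : A = (A + 1) + (-1) := by ring
    rw [this, Padic.add_eq_max_of_ne hne, norm_neg, norm_one]
    exact max_eq_right hA1.le
  have hAne : A ≠ 0 := by
    intro h; rw [h, norm_zero] at hAnorm; norm_num at hAnorm
  -- valuation of A is 0
  have hAval : A.valuation = 0 := by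
    have h := Padic.norm_eq_zpow_neg_valuation hAne
    rw [hAnorm] at h
    have := (zpow_eq_one_iff_right₀ (by positivity : (0:ℝ) ≤ p) (by exact_mod_cast hp.one_lt.ne')).mp h.symm
    omega
  -- transfer to padicValRat
  have hval : padicValRat p ((p : ℚ) * bernoulli (p - 1)) = 0 := by
    rw [← Padic.valuation_ratCast (p := p), ← hA, hAval]
  have hBne : bernoulli (p - 1) ≠ 0 := by
    intro h
    rw [h, mul_zero] at hA
    simp at hA
    exact hAne (by rw [hA])
  have hpQ : ((p : ℚ)) ≠ 0 := by positivity
  rw [padicValRat.mul hpQ hBne, padicValRat.self hp.one_lt] at hval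
  omega
end

section
/- Let $R$ be a commutative ring, $M$ an associative $R$-algebra which is $\mu$-torsion-free, $e, T \in M$ with $Te \equiv eT \pmod{\mu}$, and let $\delta T = \frac{1}{\mu}(Te - eT)$. Define $D_n T = \sum_{i=1}^n \binom{n}{i} e^{n-i} \mu^{i-1} \delta^i T$. Then $\mu \cdot D_n T = T e^n - e^n T$; in particular $D_n T = 0$ if and only if $T$ commutes with $e^n$. -/
/-- With `δ T = (1/μ)(Te - eT)` and `d i = μ^(i-1) δ^i T` (characterized by
`μ • d i = (ad_e)^[i] T`), the element `D_n T = ∑_{i=1}^n C(n,i) e^(n-i) d i` satisfies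
`μ • D_n T = T e^n - e^n T`; in particular, if `M` is `μ`-torsion-free, `D_n T = 0` iff
`T` commutes with `e^n`. -/
theorem Dn_eq_commutator_with_pow {R M : Type*} [CommRing R] [Ring M] [Algebra R M]
    (μ : R) (htf : ∀ m : M, μ • m = 0 → m = 0) (e T : M) (d : ℕ → M)
    (hd : ∀ i, 1 ≤ i → μ • d i = (fun x => x * e - e * x)^[i] T) (n : ℕ) :
    μ • (∑ i ∈ Finset.Icc 1 n, (n.choose i : M) * (e ^ (n - i) * d i)) =
        T * e ^ n - e ^ n * T ∧
      ((∑ i ∈ Finset.Icc 1 n, (n.choose i : M) * (e ^ (n - i) * d i)) = 0 ↔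
        T * e ^ n = e ^ n * T) := by
  classical
  set L := LinearMap.mulLeft R e with hL
  set A := LinearMap.mulRight R e - LinearMap.mulLeft R e with hA
  have hc : Commute L A :=
    ((LinearMap.commute_mulLeft_right e e).sub_right (Commute.refl L))
  have hAiter : ∀ i (x : M), (A ^ i) x = (fun x => x * e - e * x)^[i] x := by
    intro i
    induction i with
    | zero => intro x; simp
    | succ i ih =>
      intro x
      rw [pow_succ, Module.End.mul_apply, Function.iterate_succ_apply]
      rw [ih (A x)]
      have hx : A x = x * e - e * x := by simp [hA]
      rw [hx]
  -- key identity
  have hTe : T * e ^ n = ∑ i ∈ Finset.range (n + 1),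
      (n.choose i) • (e ^ (n - i) * (A ^ i) T) := by
    have h1 : L + A = LinearMap.mulRight R e := by simp [hL, hA]
    have h2 : T * e ^ n = ((L + A) ^ n) T := by
      rw [h1, LinearMap.pow_mulRight, LinearMap.mulRight_apply]
    rw [h2, hc.add_pow]
    rw [LinearMap.sum_apply]
    rw [← Finset.sum_range_reflect]
    simp only [Nat.add_sub_cancel]
    apply Finset.sum_congr rfl
    intro i hi
    rw [Finset.mem_range] at hi
    have hi' : i ≤ n := Nat.lt_succ_iff.mp hi
    rw [Nat.sub_sub_self hi', Nat.choose_symm hi']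
    rw [Module.End.mul_apply, Module.End.mul_apply, Module.End.natCast_apply,
      map_nsmul, map_nsmul, hL, LinearMap.pow_mulLeft, LinearMap.mulLeft_apply]
  have hIcc : Finset.range (n + 1) = insert 0 (Finset.Icc 1 n) := by
    ext k
    simp [Finset.mem_range, Finset.mem_Icc, Nat.lt_succ_iff]
    omega
  have hkey : T * e ^ n - e ^ n * T =
      ∑ i ∈ Finset.Icc 1 n, (n.choose i : M) * (e ^ (n - i) * (A ^ i) T) := by
    rw [hTe, hIcc, Finset.sum_insert (by simp)]
    simp only [pow_zero, Nat.choose_zero_right, one_smul, Module.End.one_apply, Nat.sub_zero]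
    rw [add_sub_cancel_left]
    apply Finset.sum_congr rfl
    intro i hi
    rw [nsmul_eq_mul]
  have hmain : μ • (∑ i ∈ Finset.Icc 1 n, (n.choose i : M) * (e ^ (n - i) * d i)) =
      T * e ^ n - e ^ n * T := by
    rw [Finset.smul_sum, hkey]
    apply Finset.sum_congr rfl
    intro i hi
    rw [Finset.mem_Icc] at hi
    rw [← mul_smul_comm, ← mul_smul_comm, hd i hi.1, hAiter]
  refine ⟨hmain, ?_, ?_⟩
  · intro h
    rw [h, smul_zero] at hmain
    exact sub_eq_zero.mp hmain.symm
  · intro h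
    apply htf
    rw [hmain, h, sub_self]
end

section
/- Let $R$ be a commutative ring, $p$ a prime, $\mu \in R$ a multiple of $p$, and $M$ a $\mu$-torsion-free associative $R$-algebra. Suppose $E \in M$ satisfies $E \equiv 1 \pmod{\mu}$, i.e. $E = 1 + \mu x$ for some $x \in M$ commuting with $E$. Then for every positive integer $n$, $E^n \equiv 1 \pmod{p^{\nu_p(n)} \mu}$, where $\nu_p$ denotes the $p$-adic valuation of $n$. -/
/-- Key arithmetic fact: `p^(ν_p n) ∣ C(n,k) * p^(k-1)` for `k ≥ 1`. -/
lemma aux_pow_padicValNat_dvd_choose_mul_pow (p : ℕ) (hp : p.Prime) (n k : ℕ) (hk : 0 < k) :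
    p ^ padicValNat p n ∣ n.choose k * p ^ (k - 1) := by
  rcases le_or_gt k n with hkn | hkn
  · -- n ∣ choose n k * k
    obtain ⟨b, rfl⟩ := Nat.exists_eq_add_of_lt hk  -- k = 0 + b + 1
    have hn0 : 0 < n := lt_of_lt_of_le hk hkn
    obtain ⟨a, rfl⟩ := Nat.exists_eq_add_of_lt hn0
    have hnd : (0 + a + 1) ∣ (0 + a + 1).choose (0 + b + 1) * (0 + b + 1) := by
      refine ⟨a.choose b, ?_⟩
      have := Nat.add_one_mul_choose_eq a b
      simp only [Nat.zero_add]
      omega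
    set n := 0 + a + 1
    set k := 0 + b + 1
    have h1 : p ^ padicValNat p n ∣ n.choose k * k :=
      dvd_trans pow_padicValNat_dvd hnd
    -- split k = p^v * u with p ∤ u
    have hk0 : k ≠ 0 := by omega
    have hkfact : k = p ^ (k.factorization p) * (k / p ^ (k.factorization p)) :=
      (Nat.ordProj_mul_ordCompl_eq_self k p).symm
    have hval : k.factorization p = padicValNat p k := Nat.factorization_def k hp
    have hcop : Nat.Coprime (p ^ padicValNat p n) (k / p ^ (k.factorization p)) :=
      Nat.Coprime.pow_left _ (Nat.coprime_ordCompl hp hk0)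
    have h2 : p ^ padicValNat p n ∣ n.choose k * p ^ (k.factorization p) := by
      apply hcop.dvd_of_dvd_mul_right
      calc p ^ padicValNat p n ∣ n.choose k * k := h1
        _ = n.choose k * p ^ (k.factorization p) * (k / p ^ (k.factorization p)) := by
            rw [mul_assoc, ← hkfact]
    -- factorization p k ≤ k - 1
    have h3 : k.factorization p < k := by
      have hle : p ^ (k.factorization p) ≤ k :=
        Nat.le_of_dvd (by omega) (Nat.ordProj_dvd k p)
      have : k.factorization p < 2 ^ (k.factorization p) := Nat.lt_two_pow_self
      have h2p : 2 ^ (k.factorization p) ≤ p ^ (k.factorization p) :=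
        Nat.pow_le_pow_left hp.two_le _
      omega
    refine dvd_trans h2 (mul_dvd_mul_left _ (pow_dvd_pow p ?_))
    omega
  · simp [Nat.choose_eq_zero_of_lt hkn]

/-- If `μ = p μ'` in `R` with `p` prime, and `E = 1 + μ • x` in a `μ`-torsion-free
associative `R`-algebra `M`, then `E^n ≡ 1 (mod p^(ν_p(n)) μ)` for every positive `n`. -/
theorem pow_one_add_mul_smul_congr {R M : Type*} [CommRing R] [Ring M] [Algebra R M]
    (p : ℕ) (hp : p.Prime) (μ μ' : R) (hμ : μ = (p : R) * μ')
    (htf : ∀ m : M, μ • m = 0 → m = 0)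
    (x E : M) (hE : E = 1 + μ • x) (n : ℕ) (hn : 0 < n) :
    ∃ m : M, E ^ n - 1 = (((p : R) ^ padicValNat p n) * μ) • m := by
  set ν := padicValNat p n with hν
  have key2 : ∀ m : ℕ, ∃ d : R,
      ((n.choose (m + 1) : ℕ) : R) * μ ^ (m + 1) = ((p : R) ^ ν * μ) * d := by
    intro m
    obtain ⟨c, hc⟩ := aux_pow_padicValNat_dvd_choose_mul_pow p hp n (m + 1) m.succ_pos
    simp only [Nat.add_sub_cancel] at hc
    refine ⟨(c : R) * μ' ^ m, ?_⟩
    have hc' : ((n.choose (m + 1) : ℕ) : R) * (p : R) ^ m = (p : R) ^ ν * (c : R) := by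
      exact_mod_cast congrArg (Nat.cast : ℕ → R) hc
    subst hμ
    linear_combination ((p : R) * μ' ^ (m + 1)) * hc'
  choose f hf using key2
  refine ⟨∑ m ∈ Finset.range n, f m • x ^ (m + 1), ?_⟩
  have hcomm : Commute (μ • x) (1 : M) := Commute.one_right _
  have hpow : E ^ n = ∑ m ∈ Finset.range (n + 1), (μ • x) ^ m * (n.choose m : M) := by
    rw [hE, add_comm]
    simpa using hcomm.add_pow n
  rw [hpow, Finset.sum_range_succ']
  simp only [pow_zero, Nat.choose_zero_right, Nat.cast_one, one_mul, mul_one,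
    add_sub_cancel_right]
  rw [Finset.smul_sum]
  refine Finset.sum_congr rfl ?_
  intro m _
  have h1 : (μ • x) ^ (m + 1) = μ ^ (m + 1) • x ^ (m + 1) := smul_pow μ x (m + 1)
  rw [h1]
  have h2 : (μ ^ (m + 1) • x ^ (m + 1)) * ((n.choose (m + 1) : ℕ) : M)
      = (((n.choose (m + 1) : ℕ) : R) * μ ^ (m + 1)) • x ^ (m + 1) := by
    rw [smul_mul_assoc, (Nat.cast_commute (n.choose (m + 1)) (x ^ (m + 1))).symm.eq,
      ← nsmul_eq_mul, ← Nat.cast_smul_eq_nsmul R, smul_smul,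
      mul_comm (μ ^ (m + 1)) (((n.choose (m + 1) : ℕ) : R))]
  rw [h2, hf m, mul_smul]
end

section
/- Let $A$ be a commutative ring, $M$ an $A$-module, $\lambda: A \to A$ a ring homomorphism (eigencharacter), and consider Hochschild 1-cocycles for the bimodule $M^\lambda$ (left action the module action, right action through $\lambda$). A 1-cocycle $\phi : A \to M^\lambda$ satisfies $a_0 \phi(a_1) - \phi(a_0 a_1) + \lambda(a_1)\phi(a_0) = 0$; a 1-coboundary has the form $a \mapsto a m - \lambda(a) m$ for fixed $m \in M$. If $A$ is a polynomial ring $R[T_s : s \in S]$ over a commutative ring $R$ and $\phi$ is determined by its values $f_s = \phi(T_s)$, then the cocycle condition on generators becomes: $T_{s_0} f_{s_1} - \lambda(T_{s_0}) f_{s_1} = T_{s_1} f_{s_0} - \lambda(T_{s_1}) f_{s_0}$ for all $s_0, s_1 \in S$. Verify: for a polynomial algebra, any family $(f_s)_{s\in S}$ satisfying this symmetric condition extends to a unique $R$-linear 1-cocycle on $A$ — equivalently, $HH^1(A; M^\lambda)$ is isomorphic to the module of such families modulo the families $f_s = T_s m - \lambda(T_s) m$. -/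
open MvPolynomial

/-- For a polynomial algebra `A = R[T_s : s ∈ S]` acting on a module `M`, with an
eigencharacter `λ : A → R` (bimodule `M^λ` with right action through `λ`), any family
`(f_s)` satisfying the symmetric cocycle condition
`T_{s₀} f_{s₁} - λ(T_{s₀}) f_{s₁} = T_{s₁} f_{s₀} - λ(T_{s₁}) f_{s₀}`
extends to a unique `R`-linear Hochschild 1-cocycle `φ : A → M^λ` with `φ(T_s) = f_s`. -/
theorem polynomial_cocycle_extension {R : Type*} [CommRing R] {S : Type*} {M : Type*}
    [AddCommGroup M] [Module (MvPolynomial S R) M]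
    (lam : MvPolynomial S R →ₐ[R] R) (f : S → M)
    (hf : ∀ s₀ s₁ : S,
      (X s₀ : MvPolynomial S R) • f s₁ - (C (lam (X s₀)) : MvPolynomial S R) • f s₁ =
        (X s₁ : MvPolynomial S R) • f s₀ - (C (lam (X s₁)) : MvPolynomial S R) • f s₀) :
    ∃! φ : MvPolynomial S R →+ M,
      (∀ (r : R) (a : MvPolynomial S R), φ (C r * a) = (C r : MvPolynomial S R) • φ a) ∧
      (∀ s : S, φ (X s) = f s) ∧
      (∀ a b : MvPolynomial S R,
        φ (a * b) = a • φ b + (C (lam b) : MvPolynomial S R) • φ a) := by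
  set A := MvPolynomial S R
  -- uniqueness, proved first
  have uniq : ∀ φ₁ φ₂ : A →+ M,
      ((∀ (r : R) (a : A), φ₁ (C r * a) = (C r : A) • φ₁ a) ∧
        (∀ s : S, φ₁ (X s) = f s) ∧
        (∀ a b : A, φ₁ (a * b) = a • φ₁ b + (C (lam b) : A) • φ₁ a)) →
      ((∀ (r : R) (a : A), φ₂ (C r * a) = (C r : A) • φ₂ a) ∧
        (∀ s : S, φ₂ (X s) = f s) ∧
        (∀ a b : A, φ₂ (a * b) = a • φ₂ b + (C (lam b) : A) • φ₂ a)) → φ₁ = φ₂ := by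
    rintro φ₁ φ₂ ⟨h11, h12, h13⟩ ⟨h21, h22, h23⟩
    have hone : ∀ (φ : A →+ M),
        (∀ a b : A, φ (a * b) = a • φ b + (C (lam b) : A) • φ a) → φ 1 = 0 := by
      intro φ h
      have := h 1 1
      rw [mul_one, one_smul, map_one lam, C_1, one_smul] at this
      exact (left_eq_add.mp this)
    refine AddMonoidHom.ext fun a => ?_
    induction a using MvPolynomial.induction_on with
    | C r =>
      have e1 : φ₁ (C r) = 0 := by
        have := h11 r 1; rw [mul_one, hone φ₁ h13, smul_zero] at this; exact this
      have e2 : φ₂ (C r) = 0 := by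
        have := h21 r 1; rw [mul_one, hone φ₂ h23, smul_zero] at this; exact this
      rw [e1, e2]
    | add p q hp hq => rw [map_add, map_add, hp, hq]
    | mul_X p s hp => rw [h13, h23, hp, h12, h22]
  -- right action of `A` on `M` through `lam`
  let g : Aᵐᵒᵖ →+* A :=
    RingHom.fromOpposite ((C : R →+* A).comp lam.toRingHom) (fun x y => mul_comm _ _)
  letI : Module Aᵐᵒᵖ M := Module.compHom M g
  have hop : ∀ (a : A) (m : M), (MulOpposite.op a) • m = (C (lam a) : A) • m := fun _ _ => rfl
  letI : SMulCommClass A Aᵐᵒᵖ M :=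
    ⟨fun a b m => by
      rw [← MulOpposite.op_unop b, hop, hop, smul_smul, smul_smul, mul_comm]⟩
  letI : Module R M := Module.compHom M (C : R →+* A)
  have hR : ∀ (r : R) (m : M), r • m = (C r : A) • m := fun _ _ => rfl
  letI : IsScalarTower R A M :=
    ⟨fun r a m => by
      rw [hR, Algebra.smul_def, mul_smul]; rfl⟩
  letI : IsScalarTower R Aᵐᵒᵖ M :=
    ⟨fun r b m => by
      rw [← MulOpposite.op_unop b, ← MulOpposite.op_smul, hop, hop, map_smul,
        smul_eq_mul, map_mul, mul_smul, hR]⟩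
  letI : Algebra R (TrivSqZeroExt A M) := TrivSqZeroExt.algebra' R A M
  set B := TrivSqZeroExt A M with hB
  -- generators
  set gen : S → B := fun s => TrivSqZeroExt.inl (X s) + TrivSqZeroExt.inr (f s) with hgen
  have hfst : ∀ s, (gen s).fst = X s := by
    intro s
    rw [hgen]
    rw [TrivSqZeroExt.fst_add, TrivSqZeroExt.fst_inl, TrivSqZeroExt.fst_inr, add_zero]
  have hsnd : ∀ s, (gen s).snd = f s := by
    intro s
    rw [hgen]
    rw [TrivSqZeroExt.snd_add, TrivSqZeroExt.snd_inl, TrivSqZeroExt.snd_inr, zero_add]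
  have hcomm : ∀ x ∈ Set.range gen, ∀ y ∈ Set.range gen, x * y = y * x := by
    rintro - ⟨s₀, rfl⟩ - ⟨s₁, rfl⟩
    refine TrivSqZeroExt.ext ?_ ?_
    · rw [TrivSqZeroExt.fst_mul, TrivSqZeroExt.fst_mul, mul_comm]
    · rw [TrivSqZeroExt.snd_mul, TrivSqZeroExt.snd_mul, hfst, hfst, hsnd, hsnd, hop, hop]
      have := hf s₀ s₁
      rw [sub_eq_sub_iff_add_eq_add] at this
      linear_combination (norm := module) this
  letI : CommRing (Algebra.adjoin R (Set.range gen)) := Algebra.adjoinCommRingOfComm R hcomm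
  let Φ : A →ₐ[R] B :=
    (Algebra.adjoin R (Set.range gen)).val.comp
      (aeval (fun s => (⟨gen s, Algebra.subset_adjoin (Set.mem_range_self s)⟩ :
        Algebra.adjoin R (Set.range gen))))
  have hΦX : ∀ s, Φ (X s) = gen s := by
    intro s
    show ((aeval _) (X s) : Algebra.adjoin R (Set.range gen)).val = gen s
    rw [aeval_X]
  have hΦfst : ∀ a, (Φ a).fst = a := by
    have : (TrivSqZeroExt.fstHom R A M).comp Φ = AlgHom.id R A := by
      apply MvPolynomial.algHom_ext
      intro s
      simp only [AlgHom.comp_apply, hΦX, AlgHom.id_apply]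
      exact hfst s
    intro a
    exact congrArg (fun ψ => ψ a) (congrArg DFunLike.coe this)
  let φ : A →+ M :=
    { toFun := fun a => (Φ a).snd,
      map_zero' := show (Φ 0).snd = 0 by rw [map_zero]; rfl,
      map_add' := fun a b => show (Φ (a + b)).snd = (Φ a).snd + (Φ b).snd by
        rw [map_add]; rfl }
  have prop : (∀ (r : R) (a : A), φ (C r * a) = (C r : A) • φ a) ∧
      (∀ s : S, φ (X s) = f s) ∧
      (∀ a b : A, φ (a * b) = a • φ b + (C (lam b) : A) • φ a) := by
    refine ⟨?_, ?_, ?_⟩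
    · intro r a
      have hCr : Φ (C r) = TrivSqZeroExt.inl (C r) := by
        have h : (C r : A) = algebraMap R A r := rfl
        rw [h, AlgHom.commutes]
        rfl
      show (Φ (C r * a)).snd = (C r : A) • (Φ a).snd
      rw [map_mul Φ, hCr, TrivSqZeroExt.snd_mul, TrivSqZeroExt.fst_inl, TrivSqZeroExt.snd_inl,
        smul_zero, add_zero]
    · intro s
      show (Φ (X s)).snd = f s
      rw [hΦX]; exact hsnd s
    · intro a b
      show (Φ (a * b)).snd = _
      rw [map_mul Φ, TrivSqZeroExt.snd_mul, hΦfst, hΦfst, hop]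
      rfl
  exact ⟨φ, prop, fun φ' h' => uniq φ' φ h' prop⟩
end
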